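/- On words of length n, for every letter a: ∂_a ∘ ν_k − ν_k ∘ ∂_a = (n + 1 − k)·ν_{k−1} ∘ ∂_a + Σ_{b=1}^{n} θ_{a,b} ∘ ν_{k−1} ∘ ∂_b, where the ν operators after ∂ act on words of length n−1. -/

import Mathlib

/-- Insertion operator: `shOp A a` sends a word `w` (basis element of the free
`ℂ`-vector space on words) to the sum of the words obtained by inserting the
letter `a` at each of the `w.length + 1` possible positions. -/
noncomputable def shOp (A : Type) [DecidableEq A] (a : A) :
    (List A →₀ ℂ) →ₗ[ℂ] (List A →₀ ℂ) :=
  Finsupp.lift (List A →₀ ℂ) ℂ (List A)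
    (fun w => ∑ i : Fin (w.length + 1), Finsupp.single (List.insertIdx w i a) 1)

/-- Deletion operator: `delOp A a` sends a word `w` to the sum, over all positions
`i` with `w_i = a`, of the word obtained by deleting position `i`. -/
noncomputable def delOp (A : Type) [DecidableEq A] (a : A) :
    (List A →₀ ℂ) →ₗ[ℂ] (List A →₀ ℂ) :=
  Finsupp.lift (List A →₀ ℂ) ℂ (List A)
    (fun w => ∑ i : Fin w.length,
      if w.get i = a then Finsupp.single (w.eraseIdx i) 1 else 0)

/-- Replacement operator: `thetaOp A b a` sends a word `w` to the sum, over all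
positions `i` with `w_i = b`, of the word obtained by replacing the letter at
position `i` by `a`. -/
noncomputable def thetaOp (A : Type) [DecidableEq A] (b a : A) :
    (List A →₀ ℂ) →ₗ[ℂ] (List A →₀ ℂ) :=
  Finsupp.lift (List A →₀ ℂ) ℂ (List A)
    (fun w => ∑ i : Fin w.length,
      if w.get i = b then Finsupp.single (w.set i a) 1 else 0)


/-- Composition `sh_{a₁} ∘ sh_{a₂} ∘ ⋯ ∘ sh_{a_k}` of insertion operators along a list. -/
noncomputable def shChain (A : Type) [DecidableEq A] (l : List A) :
    (List A →₀ ℂ) →ₗ[ℂ] (List A →₀ ℂ) :=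
  l.foldr (fun c f => (shOp A c).comp f) LinearMap.id

/-- Composition `∂_{a₁} ∘ ∂_{a₂} ∘ ⋯ ∘ ∂_{a_k}` of deletion operators along a list. -/
noncomputable def delChain (A : Type) [DecidableEq A] (l : List A) :
    (List A →₀ ℂ) →ₗ[ℂ] (List A →₀ ℂ) :=
  l.foldr (fun c f => (delOp A c).comp f) LinearMap.id

open scoped Classical in
/-- The symmetrized shuffling operator
`ν_k = Σ_{1 ≤ a₁ ≤ ⋯ ≤ a_k ≤ n} (1/∏_j #{l : a_l = j}!) · sh_{a₁}∘⋯∘sh_{a_k}∘∂_{a₁}∘⋯∘∂_{a_k}`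
on the word algebra over the alphabet `{1,…,n}` (here `Fin n`). -/
noncomputable def nuOp (n k : ℕ) :
    (List (Fin n) →₀ ℂ) →ₗ[ℂ] (List (Fin n) →₀ ℂ) :=
  ∑ a ∈ Finset.univ.filter (fun a : Fin k → Fin n => Monotone a),
    (((∏ j : Fin n,
        Nat.factorial ((Finset.univ.filter (fun l : Fin k => a l = j)).card) : ℕ) : ℂ))⁻¹ •
      ((shChain (Fin n) (List.ofFn a)).comp (delChain (Fin n) (List.ofFn a)))

/-!
The insertion operators commute with each other, and so do the deletion operators; since a
non-decreasing `k`-tuple with multiplicities `m_j` has `k! / ∏_j m_j!` rearrangements,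
`k! • ν_k = N_k := ∑_{b : Fin k → Fin n} sh_{b₁} ⋯ sh_{b_k} ∂_{b₁} ⋯ ∂_{b_k}`, and
`N_{k+1} = ∑_c sh_c N_k ∂_c`.
By induction on words, with `E` multiplying a word by its length,
`∂_a sh_c = sh_c ∂_a + δ_{ac} (E + 1) + θ_{a,c}` and `θ_{a,b} sh_c = sh_c θ_{a,b} + δ_{ac} sh_b`.
Pushing `∂_a` through the recursion gives, by induction on `k`, the operator identity
`∂_a N_{k+1} - N_{k+1} ∂_a = (k + 1) (N_k ∂_a (E - k) + ∑_c θ_{a,c} N_k ∂_c)`,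
and `E` acts on words of length `n` as `n`.
-/

open Finset
open Finsupp (single)
open scoped Nat

/- The operators live in `Module.End ℂ (List A →₀ ℂ)` built on `Finsupp.instAddCommMonoid`, which
does not unify with the `AddCommGroup.toAddCommMonoid` of `Module.End.instRing` at instance
transparency; without this instance ring lemmas such as `mul_sub` do not fire on them. -/
noncomputable instance instRingEndFinsupp (ι : Type*) : Ring (Module.End ℂ (ι →₀ ℂ)) :=
  Module.End.instRing

theorem linearMap_ext_single_one {ι R M : Type*} [Semiring R] [AddCommMonoid M] [Module R M]
    {f g : (ι →₀ R) →ₗ[R] M} (h : ∀ i, f (single i 1) = g (single i 1)) : f = g :=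
  Finsupp.basisSingleOne.ext (by simpa using h)

noncomputable def consOp (A : Type) (x : A) : Module.End ℂ (List A →₀ ℂ) :=
  Finsupp.lmapDomain ℂ ℂ (List.cons x)

noncomputable def lengthOp (A : Type) : Module.End ℂ (List A →₀ ℂ) :=
  Finsupp.lift (List A →₀ ℂ) ℂ (List A) fun w => (w.length : ℂ) • single w 1

section Words

variable {A : Type}

theorem consOp_single (x : A) (w : List A) (c : ℂ) :
    consOp A x (single w c) = single (x :: w) c := by
  simp [consOp]

@[simp] theorem lengthOp_single (w : List A) :
    lengthOp A (single w 1) = (w.length : ℂ) • single w 1 := by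
  simp only [lengthOp, Finsupp.lift_apply, Finsupp.sum_single_index, zero_smul, one_smul]

theorem lengthOp_consOp (x : A) (y : List A →₀ ℂ) :
    lengthOp A (consOp A x y) = consOp A x (lengthOp A y) + consOp A x y := by
  have key : lengthOp A * consOp A x = consOp A x * lengthOp A + consOp A x :=
    linearMap_ext_single_one fun w => by simp [add_smul, consOp_single]
  exact LinearMap.congr_fun key y

variable [DecidableEq A]

theorem shOp_single_nil (a : A) : shOp A a (single [] 1) = consOp A a (single [] 1) := by
  simp [shOp, consOp_single]

@[simp] theorem delOp_single_nil (a : A) : delOp A a (single [] 1) = 0 := by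
  simp [delOp]

@[simp] theorem thetaOp_single_nil (b a : A) : thetaOp A b a (single [] 1) = 0 := by
  simp [thetaOp]

theorem shOp_consOp (a x : A) (y : List A →₀ ℂ) :
    shOp A a (consOp A x y) = consOp A a (consOp A x y) + consOp A x (shOp A a y) := by
  have key : shOp A a * consOp A x = consOp A a * consOp A x + consOp A x * shOp A a :=
    linearMap_ext_single_one fun w => by simp [shOp, Fin.sum_univ_succ, map_sum, consOp_single]
  exact LinearMap.congr_fun key y

theorem delOp_consOp (a x : A) (y : List A →₀ ℂ) :
    delOp A a (consOp A x y) = (if x = a then y else 0) + consOp A x (delOp A a y) := by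
  have key : delOp A a * consOp A x = (if x = a then 1 else 0) + consOp A x * delOp A a :=
    linearMap_ext_single_one fun w => by
      simp [delOp, Fin.sum_univ_succ, map_sum, consOp_single, DFunLike.ite_apply,
        apply_ite (consOp A x)]
  simpa [DFunLike.ite_apply] using LinearMap.congr_fun key y

theorem thetaOp_consOp (b a x : A) (y : List A →₀ ℂ) :
    thetaOp A b a (consOp A x y)
      = (if x = b then consOp A a y else 0) + consOp A x (thetaOp A b a y) := by
  have key : thetaOp A b a * consOp A x
      = (if x = b then consOp A a else 0) + consOp A x * thetaOp A b a :=
    linearMap_ext_single_one fun w => by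
      by_cases h : x = b <;>
        simp [h, thetaOp, Fin.sum_univ_succ, map_sum, consOp_single, apply_ite]
  simpa [DFunLike.ite_apply] using LinearMap.congr_fun key y

theorem delOp_commute (a c : A) : Commute (delOp A a) (delOp A c) := by
  refine linearMap_ext_single_one fun w => ?_
  simp only [Module.End.mul_apply]
  induction w with
  | nil => simp
  | cons x w ih =>
    rw [← consOp_single]
    simp only [delOp_consOp, map_add, ih, apply_ite (delOp A _), map_zero]
    abel

theorem shOp_commute (a c : A) : Commute (shOp A a) (shOp A c) := by
  refine linearMap_ext_single_one fun w => ?_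
  simp only [Module.End.mul_apply]
  induction w with
  | nil =>
    simp only [shOp_single_nil, shOp_consOp]
    abel
  | cons x w ih =>
    rw [← consOp_single]
    simp only [shOp_consOp, map_add, ih]
    abel

theorem thetaOp_mul_shOp (a b c : A) :
    thetaOp A a b * shOp A c = shOp A c * thetaOp A a b + if c = a then shOp A b else 0 := by
  refine linearMap_ext_single_one fun w => ?_
  simp only [Module.End.mul_apply, LinearMap.add_apply, DFunLike.ite_apply, LinearMap.zero_apply]
  induction w with
  | nil =>
    rw [shOp_single_nil, thetaOp_consOp]
    split_ifs <;> simp [shOp_single_nil]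
  | cons x w ih =>
    rw [← consOp_single]
    simp only [shOp_consOp, thetaOp_consOp, map_add, ih]
    split_ifs <;> subst_vars <;> simp [shOp_consOp] <;> abel

theorem delOp_mul_shOp (a c : A) :
    delOp A a * shOp A c
      = shOp A c * delOp A a + (if c = a then lengthOp A + 1 else 0) + thetaOp A a c := by
  refine linearMap_ext_single_one fun w => ?_
  simp only [Module.End.mul_apply, LinearMap.add_apply, DFunLike.ite_apply, LinearMap.zero_apply,
    Module.End.one_apply]
  induction w with
  | nil =>
    rw [shOp_single_nil, delOp_consOp]
    split_ifs <;> simp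
  | cons x w ih =>
    rw [← consOp_single]
    simp only [shOp_consOp, delOp_consOp, thetaOp_consOp, lengthOp_consOp, map_add, ih]
    split_ifs <;> simp <;> abel

theorem lengthOp_mul_shOp (c : A) : lengthOp A * shOp A c = shOp A c * (lengthOp A + 1) := by
  refine linearMap_ext_single_one fun w => ?_
  simp only [Module.End.mul_apply, LinearMap.add_apply, Module.End.one_apply]
  induction w with
  | nil => simp [shOp_single_nil, lengthOp_consOp]
  | cons x w ih =>
    rw [← consOp_single]
    simp only [shOp_consOp, lengthOp_consOp, map_add, ih]
    abel

theorem delOp_mul_lengthOp (c : A) : delOp A c * lengthOp A = (lengthOp A + 1) * delOp A c := by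
  refine linearMap_ext_single_one fun w => ?_
  simp only [Module.End.mul_apply, LinearMap.add_apply, Module.End.one_apply]
  induction w with
  | nil => simp
  | cons x w ih =>
    rw [← consOp_single]
    simp only [delOp_consOp, lengthOp_consOp, map_add, ih]
    split_ifs <;> simp

theorem lengthOp_sub_natCast_mul_delOp (c : A) (j : ℕ) :
    (lengthOp A - j) * delOp A c = delOp A c * (lengthOp A - (j + 1 : ℕ)) := by
  rw [mul_sub, delOp_mul_lengthOp, ← Nat.cast_comm]
  push_cast
  noncomm_ring

end Words

section Chains

variable {A : Type} [DecidableEq A]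

theorem shChain_cons (c : A) (l : List A) : shChain A (c :: l) = shOp A c * shChain A l := rfl

theorem delChain_cons (c : A) (l : List A) : delChain A (c :: l) = delOp A c * delChain A l := rfl

theorem shChain_perm {l l' : List A} (h : l.Perm l') : shChain A l = shChain A l' :=
  h.foldr_eq (lcomm := ⟨fun a b T => (shOp_commute a b).left_comm T⟩) _

theorem delChain_perm {l l' : List A} (h : l.Perm l') : delChain A l = delChain A l' :=
  h.foldr_eq (lcomm := ⟨fun a b T => (delOp_commute a b).left_comm T⟩) _

theorem delOp_commute_delChain (c : A) (l : List A) : Commute (delOp A c) (delChain A l) := by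
  induction l with
  | nil => exact Commute.one_right _
  | cons d l ih => rw [delChain_cons]; exact (delOp_commute c d).mul_right ih

end Chains

section Symmetrization

variable (A : Type) [DecidableEq A] [Fintype A]

noncomputable def shDel : Module.End ℂ (Module.End ℂ (List A →₀ ℂ)) :=
  ∑ c : A, LinearMap.mulLeft ℂ (shOp A c) ∘ₗ LinearMap.mulRight ℂ (delOp A c)

noncomputable def shDelIter : ℕ → Module.End ℂ (List A →₀ ℂ)
  | 0 => 1
  | k + 1 => shDel A (shDelIter k)

variable {A}

theorem shDel_apply (T : Module.End ℂ (List A →₀ ℂ)) :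
    shDel A T = ∑ c, shOp A c * T * delOp A c := by
  simp [shDel, mul_assoc]

theorem shDelIter_zero : shDelIter A 0 = 1 := rfl

theorem shDelIter_succ (k : ℕ) : shDelIter A (k + 1) = shDel A (shDelIter A k) := rfl

theorem lengthOp_commute_shDel {T : Module.End ℂ (List A →₀ ℂ)}
    (hT : Commute (lengthOp A) T) :
    Commute (lengthOp A) (shDel A T) := by
  rw [shDel_apply]
  refine Commute.sum_right _ _ _ fun c _ => ?_
  calc lengthOp A * (shOp A c * T * delOp A c)
      = shOp A c * ((lengthOp A + 1) * T) * delOp A c := by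
        simp only [← mul_assoc, lengthOp_mul_shOp]
    _ = shOp A c * (T * (lengthOp A + 1)) * delOp A c := by
        rw [(hT.add_left (Commute.one_left T)).eq]
    _ = shOp A c * T * delOp A c * lengthOp A := by
        simp only [mul_assoc, delOp_mul_lengthOp]

theorem lengthOp_commute_shDelIter (k : ℕ) : Commute (lengthOp A) (shDelIter A k) := by
  induction k with
  | zero => exact Commute.one_right _
  | succ k ih => exact lengthOp_commute_shDel ih

theorem shDel_mul_delOp_mul_lengthOp_sub (T : Module.End ℂ (List A →₀ ℂ)) (a : A)
    (j : ℕ) :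
    shDel A (T * delOp A a * (lengthOp A - j))
      = shDel A T * delOp A a * (lengthOp A - (j + 1 : ℕ)) := by
  simp only [shDel_apply, sum_mul]
  refine sum_congr rfl fun c _ => ?_
  simp only [mul_assoc, lengthOp_sub_natCast_mul_delOp, (delOp_commute a c).left_comm]

theorem sum_shDel_thetaOp_mul (T : Module.End ℂ (List A →₀ ℂ)) (a : A) :
    ∑ d, shDel A (thetaOp A a d * T * delOp A d)
      = ∑ d, thetaOp A a d * shDel A T * delOp A d - shDel A T * delOp A a := by
  have term (c d : A) : shOp A c * (thetaOp A a d * T * delOp A d) * delOp A c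
      = thetaOp A a d * (shOp A c * T * delOp A c) * delOp A d
        - if c = a then shOp A d * T * delOp A d * delOp A a else 0 := by
    simp only [← mul_assoc, eq_sub_of_add_eq (thetaOp_mul_shOp a d c).symm, sub_mul]
    split_ifs with hca
    · subst hca
      simp only [mul_assoc, (delOp_commute d c).eq]
    · simp only [mul_assoc, (delOp_commute d c).eq, zero_mul]
  simp only [shDel_apply, mul_sum, sum_mul, term, sum_sub_distrib,
    sum_ite_eq', mem_univ, if_true]

theorem delOp_mul_shDel {T R : Module.End ℂ (List A →₀ ℂ)} (a : A)
    (hT : Commute (lengthOp A) T) (hR : delOp A a * T = T * delOp A a + R) :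
    delOp A a * shDel A T = shDel A T * delOp A a + shDel A R + T * delOp A a * lengthOp A
      + ∑ c, thetaOp A a c * T * delOp A c := by
  have term (c : A) : delOp A a * (shOp A c * T * delOp A c)
      = shOp A c * T * delOp A c * delOp A a + shOp A c * R * delOp A c
        + (if c = a then lengthOp A + 1 else 0) * T * delOp A c
        + thetaOp A a c * T * delOp A c := by
    rw [← mul_assoc, ← mul_assoc, delOp_mul_shOp, add_mul, add_mul, add_mul,
      mul_assoc (shOp A c), hR]
    simp only [mul_add, add_mul, mul_assoc, (delOp_commute a c).eq]
  have hE : (lengthOp A + 1) * T * delOp A a = T * delOp A a * lengthOp A := by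
    rw [(hT.add_left (Commute.one_left T)).eq, mul_assoc, ← delOp_mul_lengthOp, mul_assoc]
  simp only [shDel_apply, mul_sum, sum_mul, term, sum_add_distrib, ite_mul,
    zero_mul, sum_ite_eq', mem_univ, if_true, hE]

theorem delOp_mul_shDelIter_succ (a : A) (k : ℕ) :
    delOp A a * shDelIter A (k + 1) = shDelIter A (k + 1) * delOp A a
      + ((k + 1 : ℕ) : ℂ) • (shDelIter A k * delOp A a * (lengthOp A - k)
        + ∑ c, thetaOp A a c * shDelIter A k * delOp A c) := by
  induction k with
  | zero =>
    rw [shDelIter_succ, shDelIter_zero,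
      delOp_mul_shDel a (Commute.one_right _) (R := 0) (by simp)]
    simp [add_assoc]
  | succ k ih =>
    rw [shDelIter_succ (k + 1), delOp_mul_shDel a (lengthOp_commute_shDelIter (k + 1)) ih,
      map_smul, map_add, map_sum, shDel_mul_delOp_mul_lengthOp_sub, sum_shDel_thetaOp_mul]
    simp only [← shDelIter_succ, mul_sub, ← nsmul_eq_mul']
    module

theorem shDelIter_eq_sum (k : ℕ) :
    shDelIter A k = ∑ b : Fin k → A, shChain A (List.ofFn b) * delChain A (List.ofFn b) := by
  induction k with
  | zero => simp [shDelIter_zero, shChain, delChain, ← Module.End.one_eq_id]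
  | succ k ih =>
    rw [shDelIter_succ, shDel_apply, ih, ← (Fin.consEquiv fun _ => A).sum_comp,
      Fintype.sum_prod_type]
    refine sum_congr rfl fun c _ => ?_
    simp only [mul_sum, sum_mul]
    refine sum_congr rfl fun b _ => ?_
    change _ = shChain A (List.ofFn (Fin.cons c b)) * delChain A (List.ofFn (Fin.cons c b))
    rw [List.ofFn_cons, shChain_cons, delChain_cons, (delOp_commute_delChain c _).eq]
    simp only [mul_assoc]

end Symmetrization

section Counting

variable {α ι : Type*} [Fintype α] [DecidableEq α] [Fintype ι] [DecidableEq ι]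

theorem card_filter_comp_perm_eq_comp (f : α → ι) (τ : Equiv.Perm α) :
    #{σ : Equiv.Perm α | f ∘ σ = f ∘ τ} = ∏ i, (Fintype.card {a // f a = i})! := by
  rw [← DomMulAct.stabilizer_card f, ← Fintype.card_subtype]
  refine Fintype.card_congr (Equiv.subtypeEquiv (Equiv.mulRight τ⁻¹) fun σ => ?_)
  rw [Equiv.coe_mulRight, Equiv.Perm.coe_mul, ← Function.comp_assoc, Equiv.Perm.inv_def,
    Equiv.comp_symm_eq]

theorem card_image_comp_perm_mul_prod_factorial (f : α → ι) :
    #(univ.image fun σ : Equiv.Perm α => f ∘ σ) * ∏ i, (Fintype.card {a // f a = i})!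
      = (Fintype.card α)! := by
  rw [← Fintype.card_perm, ← card_univ,
    card_eq_sum_card_image (fun σ : Equiv.Perm α => f ∘ σ) univ, sum_const_nat]
  intro b hb
  obtain ⟨τ, -, rfl⟩ := mem_image.1 hb
  simpa using card_filter_comp_perm_eq_comp f τ

end Counting

section Sorting

variable {β : Type*} [LinearOrder β] [Fintype β] {k : ℕ}

theorem filter_comp_sort_eq_image {α : Fin k → β} (hα : Monotone α) :
    ({b | b ∘ Tuple.sort b = α} : Finset (Fin k → β))
      = univ.image fun σ : Equiv.Perm (Fin k) => α ∘ σ := by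
  ext b
  simp only [mem_filter, mem_univ, true_and, mem_image]
  constructor
  · rintro rfl
    refine ⟨(Tuple.sort b)⁻¹, ?_⟩
    rw [Function.comp_assoc, ← Equiv.Perm.coe_mul, mul_inv_cancel, Equiv.Perm.coe_one,
      Function.comp_id]
  · rintro ⟨σ, rfl⟩
    rw [Tuple.comp_perm_comp_sort_eq_comp_sort, Tuple.sort_eq_refl_iff_monotone.2 hα,
      Equiv.coe_refl, Function.comp_id]

theorem sum_monotone_inv_prod_factorial_smul {K M : Type*} [Field K] [CharZero K]
    [AddCommMonoid M] [Module K M] [DecidablePred (fun α : Fin k → β => Monotone α)]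
    (F : (Fin k → β) → M) (hF : ∀ b (σ : Equiv.Perm (Fin k)), F (b ∘ σ) = F b) :
    ∑ α ∈ univ.filter (fun α : Fin k → β => Monotone α),
        ((∏ j, (#{l | α l = j})! : ℕ) : K)⁻¹ • F α
      = ((k ! : ℕ) : K)⁻¹ • ∑ b, F b := by
  have hsort : ∀ b ∈ (univ : Finset (Fin k → β)),
      b ∘ Tuple.sort b ∈ univ.filter (fun α : Fin k → β => Monotone α) :=
    fun b _ => mem_filter.2 ⟨mem_univ _, Tuple.monotone_sort b⟩
  rw [← sum_fiberwise_of_maps_to hsort F, smul_sum]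
  refine sum_congr rfl fun α hα => ?_
  have hfiber : ∀ b ∈ ({b | b ∘ Tuple.sort b = α} : Finset (Fin k → β)), F b = F α :=
    fun b hb => by rw [← (mem_filter.1 hb).2, hF]
  rw [sum_congr rfl hfiber, sum_const, ← Nat.cast_smul_eq_nsmul K, smul_smul,
    filter_comp_sort_eq_image (mem_filter.1 hα).2]
  congr 1
  have hcard := card_image_comp_perm_mul_prod_factorial α
  simp only [Fintype.card_fin, Fintype.card_subtype] at hcard
  have himage : (#(univ.image fun σ : Equiv.Perm (Fin k) => α ∘ σ) : K) ≠ 0 :=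
    Nat.cast_ne_zero.2 (left_ne_zero_of_mul (hcard ▸ k.factorial_ne_zero))
  rw [← hcard, Nat.cast_mul, mul_inv, mul_right_comm, inv_mul_cancel₀ himage, one_mul]

end Sorting

theorem nuOp_eq_inv_factorial_smul_shDelIter (n k : ℕ) :
    nuOp n k = ((k ! : ℕ) : ℂ)⁻¹ • shDelIter (Fin n) k := by
  rw [shDelIter_eq_sum]
  exact sum_monotone_inv_prod_factorial_smul
    (fun b => shChain (Fin n) (List.ofFn b) * delChain (Fin n) (List.ofFn b))
    fun b σ => by rw [shChain_perm (σ.ofFn_comp_perm b), delChain_perm (σ.ofFn_comp_perm b)]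

theorem delOp_mul_nuOp_succ {n : ℕ} (a : Fin n) (j : ℕ) :
    delOp (Fin n) a * nuOp n (j + 1) = nuOp n (j + 1) * delOp (Fin n) a
      + (nuOp n j * delOp (Fin n) a * (lengthOp (Fin n) - j)
        + ∑ c, thetaOp (Fin n) a c * nuOp n j * delOp (Fin n) c) := by
  have hfactorial : ((j + 1)! : ℂ)⁻¹ * (j + 1 : ℕ) = (j ! : ℂ)⁻¹ := by
    rw [Nat.factorial_succ, Nat.cast_mul, mul_inv, mul_right_comm,
      inv_mul_cancel₀ (Nat.cast_ne_zero.2 j.succ_ne_zero), one_mul]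
  simp only [nuOp_eq_inv_factorial_smul_shDelIter, mul_smul_comm, smul_mul_assoc,
    delOp_mul_shDelIter_succ, smul_add, smul_smul, hfactorial, smul_sum]

/-- On words of length `n`, for every letter `a`:
`∂_a ∘ ν_k − ν_k ∘ ∂_a = (n+1−k)·ν_{k−1} ∘ ∂_a + Σ_{b=1}^{n} θ_{a,b} ∘ ν_{k−1} ∘ ∂_b`. -/
theorem del_nu_commutator (n k : ℕ) (hk : 1 ≤ k) (a : Fin n)
    (w : List (Fin n)) (hw : w.length = n) :
    delOp (Fin n) a (nuOp n k (Finsupp.single w 1))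
        - nuOp n k (delOp (Fin n) a (Finsupp.single w 1))
      = ((n : ℂ) + 1 - (k : ℂ)) • nuOp n (k-1) (delOp (Fin n) a (Finsupp.single w 1))
        + ∑ b : Fin n,
            thetaOp (Fin n) a b (nuOp n (k-1) (delOp (Fin n) b (Finsupp.single w 1))) := by
  obtain ⟨j, rfl⟩ := Nat.exists_eq_add_of_le' hk
  have hlength :
      (lengthOp (Fin n) - j) (single w 1) = ((n : ℂ) + 1 - (j + 1 : ℕ)) • single w 1 := by
    simp [hw, sub_smul]
  rw [← Module.End.mul_apply, delOp_mul_nuOp_succ]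
  simp only [LinearMap.add_apply, Module.End.mul_apply, hlength, add_sub_cancel_left, map_smul,
    LinearMap.sum_apply, Nat.add_sub_cancel]
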